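/- Binary search case 3 (isolation): in the same setting with k ≥ 2, let t_max be the largest and t' the second-largest element of 𝒯. If t' < x ≤ t_max, then the minimizer of [w, w_s, w_s^{<x}](cut(·)) over nonempty proper subsets containing s is unique; it equals the unique S_i with t_max ∈ V∖S_i, and it satisfies w_s^{<x}(cut(S_i)) = |V∖S_i| − 1. -/

import Mathlib

open Finset
open scoped Classical

/-- The weight of the cut induced by `S`. -/
noncomputable def cutWeight {V : Type*} (E : Finset (Sym2 V)) (w : Sym2 V → ℕ)
    (S : Finset V) : ℕ :=
  ∑ e ∈ E.filter (fun e => (∃ u ∈ e, u ∈ S) ∧ ∃ u ∈ e, u ∉ S), w e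

/-- Indicator weight of edges incident to `s` (the star at `s`). -/
noncomputable def starWeight {V : Type*} (s : V) : Sym2 V → ℕ :=
  fun e => if s ∈ e then 1 else 0

/-- Indicator weight of star edges `(s, v)` with `v < x`. -/
noncomputable def ltWeight {V : Type*} [LT V] (s x : V) : Sym2 V → ℕ :=
  fun e => if ∃ v : V, v < x ∧ e = Sym2.mk s v then 1 else 0

/-- `S` is a global minimum cut-set of `(V, E)` with respect to the weights `f`. -/
def IsMinCutSet {V : Type*} [Fintype V] (E : Finset (Sym2 V)) (f : Sym2 V → ℕ)
    (S : Finset V) : Prop :=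
  S.Nonempty ∧ S ≠ Finset.univ ∧ ∀ T : Finset V, T.Nonempty → T ≠ Finset.univ →
    cutWeight E f S ≤ cutWeight E f T

/-- The stitched weight `[w, w_s]` (with bound `n = |V|`). -/
noncomputable def stitch1 {V : Type*} [Fintype V] (w : Sym2 V → ℕ) (s : V) :
    Sym2 V → ℕ :=
  fun e => (Fintype.card V + 1) * w e + starWeight s e

/-- The triple-stitched weight `[w, w_s, w_s^{<x}]` (with bound `n = |V|`). -/
noncomputable def stitch2 {V : Type*} [Fintype V] [LT V] (w : Sym2 V → ℕ) (s x : V) :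
    Sym2 V → ℕ :=
  fun e => (Fintype.card V + 1) * stitch1 w s e + ltWeight s x e

/-!
Stitching `K * f + g` with `g` cutting fewer than `K` edges minimizes lexicographically: first
`f`, then `g`. Under `[w, w_s]` every minimum cut-set `S ∋ s` has a complement of the same size
`c`. For `t' < x ≤ t_max`, the star edges `(s, v)` with `v < x` leaving such an `S` go to all of
`V ∖ S` except `t_max`, so there are `c - 1` of them if `t_max ∉ S` and `c` otherwise; hence the
minimizers of `[w, w_s, w_s^{<x}]` containing `s` are the `[w, w_s]`-minimum cut-sets missing
`t_max`. Two of those coincide: by submodularity their union is again a minimum cut-set, and its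
complement, of the same size `c`, is contained in both complements.
-/

section CutWeight

variable {V : Type*} {E : Finset (Sym2 V)}

theorem cutWeight_mul_add (K : ℕ) (f g : Sym2 V → ℕ) (S : Finset V) :
    cutWeight E (fun e => K * f e + g e) S = K * cutWeight E f S + cutWeight E g S := by
  simp only [cutWeight, Finset.sum_add_distrib, Finset.mul_sum]

theorem cutWeight_inter_add_union_le [DecidableEq V] (f : Sym2 V → ℕ) (S T : Finset V) :
    cutWeight E f (S ∩ T) + cutWeight E f (S ∪ T) ≤ cutWeight E f S + cutWeight E f T := by
  simp only [cutWeight, Finset.sum_filter, ← Finset.sum_add_distrib]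
  refine Finset.sum_le_sum fun e _ => ?_
  induction e using Sym2.ind with
  | _ a b =>
    by_cases a ∈ S <;> by_cases b ∈ S <;> by_cases a ∈ T <;> by_cases b ∈ T <;>
      simp_all [Sym2.mem_iff]

variable [Fintype V] [DecidableEq V]

theorem cutWeight_compl (f : Sym2 V → ℕ) (S : Finset V) :
    cutWeight E f Sᶜ = cutWeight E f S := by
  unfold cutWeight
  congr 1
  ext e
  simp only [Finset.mem_filter, Finset.mem_compl]
  tauto

theorem cutWeight_eq_sum_compl {s : V} (hstar : ∀ v, v ≠ s → s(s, v) ∈ E)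
    {g : Sym2 V → ℕ} (hg : ∀ e, s ∉ e → g e = 0) {S : Finset V} (hs : s ∈ S) :
    cutWeight E g S = ∑ v ∈ Sᶜ, g s(s, v) := by
  rw [cutWeight, ← Finset.sum_image fun _ _ _ _ => Sym2.congr_right.1]
  symm
  apply Finset.sum_subset
  · intro e he
    obtain ⟨v, hv, rfl⟩ := Finset.mem_image.1 he
    rw [Finset.mem_compl] at hv
    simp only [Finset.mem_filter]
    exact ⟨hstar v (by rintro rfl; exact hv hs),
      ⟨s, Sym2.mem_mk_left s v, hs⟩, v, Sym2.mem_mk_right s v, hv⟩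
  · intro e he hnot
    refine hg e fun hse => hnot ?_
    obtain ⟨v, rfl⟩ := Sym2.mem_iff_exists.1 hse
    simp only [Finset.mem_filter] at he
    obtain ⟨-, -, u, hu, huS⟩ := he
    rcases Sym2.mem_iff.1 hu with rfl | rfl
    · exact absurd hs huS
    · exact Finset.mem_image_of_mem _ (Finset.mem_compl.2 huS)

theorem cutWeight_le_card {s : V} (hstar : ∀ v, v ≠ s → s(s, v) ∈ E)
    {g : Sym2 V → ℕ} (hg : ∀ e, s ∉ e → g e = 0) (hg₁ : ∀ v, g s(s, v) ≤ 1) (S : Finset V) :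
    cutWeight E g S ≤ Fintype.card V := by
  wlog hs : s ∈ S generalizing S
  · rw [← cutWeight_compl]
    exact this Sᶜ (Finset.mem_compl.2 hs)
  rw [cutWeight_eq_sum_compl hstar hg hs]
  calc ∑ v ∈ Sᶜ, g s(s, v) ≤ ∑ _v ∈ Sᶜ, 1 := Finset.sum_le_sum fun v _ => hg₁ v
    _ ≤ Fintype.card V := by simpa using Finset.card_le_univ Sᶜ

end CutWeight

section MinCut

variable {V : Type*} [Fintype V] {E : Finset (Sym2 V)} {f : Sym2 V → ℕ} {S T : Finset V}

theorem IsMinCutSet.cutWeight_eq (hS : IsMinCutSet E f S) (hT : IsMinCutSet E f T) :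
    cutWeight E f S = cutWeight E f T :=
  le_antisymm (hS.2.2 T hT.1 hT.2.1) (hT.2.2 S hS.1 hS.2.1)

variable [DecidableEq V]

theorem IsMinCutSet.compl (hS : IsMinCutSet E f S) : IsMinCutSet E f Sᶜ := by
  refine ⟨?_, (Finset.compl_ne_univ_iff_nonempty S).2 hS.1, ?_⟩
  · rw [Finset.nonempty_iff_ne_empty, Ne, Finset.compl_eq_empty_iff]
    exact hS.2.1
  · rw [cutWeight_compl]
    exact hS.2.2

/-- Uncrossing, by submodularity of the cut function. -/
theorem IsMinCutSet.union (hS : IsMinCutSet E f S) (hT : IsMinCutSet E f T)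
    (hST : (S ∩ T).Nonempty) (hU : S ∪ T ≠ Finset.univ) : IsMinCutSet E f (S ∪ T) := by
  have hinter : S ∩ T ≠ Finset.univ := fun h =>
    hS.2.1 (Finset.univ_subset_iff.1 (h ▸ Finset.inter_subset_left))
  have hsub := cutWeight_inter_add_union_le (E := E) f S T
  have hle := hS.2.2 _ hST hinter
  have heq := hS.cutWeight_eq hT
  refine ⟨hS.1.mono Finset.subset_union_left, hU, fun R hR hRu => ?_⟩
  have := hS.2.2 R hR hRu
  omega

end MinCut

theorem mul_add_lt_mul_add {K a b r r' : ℕ} (hr : r < K) (hab : a < b) :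
    K * a + r < K * b + r' := by
  nlinarith

section Stitch

variable {V : Type*} [Fintype V] {E : Finset (Sym2 V)}

theorem isMinCutSet_mul_add_iff {K : ℕ} {f g : Sym2 V → ℕ} (hg : ∀ S, cutWeight E g S < K)
    {S : Finset V} :
    IsMinCutSet E (fun e => K * f e + g e) S ↔
      IsMinCutSet E f S ∧ ∀ T, IsMinCutSet E f T → cutWeight E g S ≤ cutWeight E g T := by
  simp only [IsMinCutSet, cutWeight_mul_add]
  constructor
  · rintro ⟨hne, hnu, hmin⟩
    have hf : ∀ T : Finset V, T.Nonempty → T ≠ Finset.univ →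
        cutWeight E f S ≤ cutWeight E f T := fun T hT hTu =>
      not_lt.1 fun hlt => (hmin T hT hTu).not_gt (mul_add_lt_mul_add (hg T) hlt)
    refine ⟨⟨hne, hnu, hf⟩, fun T ⟨hT, hTu, hTmin⟩ => ?_⟩
    have hle := hmin T hT hTu
    rw [le_antisymm (hf T hT hTu) (hTmin S hne hnu)] at hle
    omega
  · rintro ⟨⟨hne, hnu, hmin⟩, hg'⟩
    refine ⟨hne, hnu, fun T hT hTu => ?_⟩
    rcases (hmin T hT hTu).eq_or_lt with heq | hlt
    · rw [heq]
      exact Nat.add_le_add_left (hg' T ⟨hT, hTu, heq ▸ hmin⟩) _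
    · exact (mul_add_lt_mul_add (hg S) hlt).le

end Stitch

section Weights

variable {V : Type*} {s : V}

theorem starWeight_eq_zero {e : Sym2 V} (he : s ∉ e) : starWeight s e = 0 :=
  if_neg he

theorem starWeight_le_one (e : Sym2 V) : starWeight s e ≤ 1 := by
  unfold starWeight
  split_ifs <;> omega

variable [LT V] {x : V}

theorem ltWeight_eq_zero {e : Sym2 V} (he : s ∉ e) : ltWeight s x e = 0 :=
  if_neg (by rintro ⟨v, -, rfl⟩; exact he (Sym2.mem_mk_left s v))

theorem ltWeight_le_one (e : Sym2 V) : ltWeight s x e ≤ 1 := by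
  unfold ltWeight
  split_ifs <;> omega

theorem ltWeight_mk_of_lt {v : V} (hv : v < x) : ltWeight s x s(s, v) = 1 :=
  if_pos ⟨v, hv, rfl⟩

theorem ltWeight_mk_of_not_lt {v : V} (hv : ¬ v < x) : ltWeight s x s(s, v) = 0 :=
  if_neg fun ⟨_, hu, he⟩ => hv (Sym2.congr_right.1 he ▸ hu)

end Weights

section Star

variable {V : Type*} [Fintype V] [DecidableEq V] {E : Finset (Sym2 V)} {s : V}
  (hstar : ∀ v, v ≠ s → s(s, v) ∈ E)
include hstar

theorem cutWeight_starWeight {S : Finset V} (hs : s ∈ S) :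
    cutWeight E (starWeight s) S = #Sᶜ := by
  rw [cutWeight_eq_sum_compl hstar (fun _ => starWeight_eq_zero) hs]
  simp [starWeight]

theorem cutWeight_starWeight_lt (S : Finset V) :
    cutWeight E (starWeight s) S < Fintype.card V + 1 :=
  Nat.lt_succ_of_le <|
    cutWeight_le_card hstar (fun _ => starWeight_eq_zero) (fun _ => starWeight_le_one _) S

variable [LT V] {x : V}

theorem cutWeight_ltWeight_lt (S : Finset V) :
    cutWeight E (ltWeight s x) S < Fintype.card V + 1 :=
  Nat.lt_succ_of_le <|
    cutWeight_le_card hstar (fun _ => ltWeight_eq_zero) (fun _ => ltWeight_le_one _) S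

theorem cutWeight_ltWeight_eq_card_erase {S : Finset V} {t : V} (hs : s ∈ S) (ht : ¬ t < x)
    (hbelow : ∀ u ∉ S, u ≠ t → u < x) :
    cutWeight E (ltWeight s x) S = #(Sᶜ.erase t) := by
  rw [cutWeight_eq_sum_compl hstar (fun _ => ltWeight_eq_zero) hs, ← Finset.filter_ne',
    Finset.card_filter]
  refine Finset.sum_congr rfl fun v hv => ?_
  by_cases hvt : v = t
  · rw [hvt, if_neg (not_not.2 rfl), ltWeight_mk_of_not_lt ht]
  · rw [if_pos hvt, ltWeight_mk_of_lt (hbelow v (Finset.mem_compl.1 hv) hvt)]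

end Star

section BinarySearch

variable {V : Type*} [Fintype V] [DecidableEq V] {E : Finset (Sym2 V)} {s : V}
  (hstar : ∀ v, v ≠ s → s(s, v) ∈ E) {w : Sym2 V → ℕ} {S T : Finset V}
include hstar

theorem card_compl_eq_of_isMinCutSet_stitch1 (hS : IsMinCutSet E (stitch1 w s) S)
    (hT : IsMinCutSet E (stitch1 w s) T) (hsS : s ∈ S) (hsT : s ∈ T) : #Sᶜ = #Tᶜ := by
  have hS' := (isMinCutSet_mul_add_iff (cutWeight_starWeight_lt hstar)).1 hS
  have hT' := (isMinCutSet_mul_add_iff (cutWeight_starWeight_lt hstar)).1 hT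
  rw [← cutWeight_starWeight hstar hsS, ← cutWeight_starWeight hstar hsT]
  exact le_antisymm (hS'.2 T hT'.1) (hT'.2 S hS'.1)

theorem eq_of_isMinCutSet_stitch1 {t : V} (hS : IsMinCutSet E (stitch1 w s) S)
    (hT : IsMinCutSet E (stitch1 w s) T) (hsS : s ∈ S) (hsT : s ∈ T) (htS : t ∉ S)
    (htT : t ∉ T) : S = T := by
  have hsST : s ∈ S ∪ T := Finset.mem_union_left T hsS
  have hU : IsMinCutSet E (stitch1 w s) (S ∪ T) :=
    hS.union hT ⟨s, Finset.mem_inter.2 ⟨hsS, hsT⟩⟩ fun h =>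
      (Finset.mem_union.1 (h ▸ Finset.mem_univ t)).elim htS htT
  have eq_union : ∀ R, IsMinCutSet E (stitch1 w s) R → s ∈ R → R ⊆ S ∪ T → R = S ∪ T :=
    fun R hR hsR hRU => compl_injective <| Eq.symm <|
      Finset.eq_of_subset_of_card_le (Finset.compl_subset_compl.2 hRU)
        (card_compl_eq_of_isMinCutSet_stitch1 hstar hR hU hsR hsST).le
  exact (eq_union S hS hsS Finset.subset_union_left).trans
    (eq_union T hT hsT Finset.subset_union_right).symm

variable [LT V] {x : V}

theorem isMinCutSet_stitch2_iff :
    IsMinCutSet E (stitch2 w s x) S ↔ IsMinCutSet E (stitch1 w s) S ∧ ∀ T,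
      IsMinCutSet E (stitch1 w s) T → cutWeight E (ltWeight s x) S ≤ cutWeight E (ltWeight s x) T :=
  isMinCutSet_mul_add_iff (cutWeight_ltWeight_lt hstar)

theorem isMinCutSet_stitch2_iff_eq {S₀ : Finset V} {t : V} (ht : ¬ t < x)
    (hbelow : ∀ S, s ∈ S → IsMinCutSet E (stitch1 w s) S → ∀ u ∉ S, u ≠ t → u < x)
    (hS₀ : IsMinCutSet E (stitch1 w s) S₀) (hs₀ : s ∈ S₀) (ht₀ : t ∉ S₀) (hs : s ∈ S) :
    IsMinCutSet E (stitch2 w s x) S ↔ S = S₀ := by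
  have hL : ∀ T, s ∈ T → IsMinCutSet E (stitch1 w s) T →
      cutWeight E (ltWeight s x) T = #(Tᶜ.erase t) := fun T hsT hT =>
    cutWeight_ltWeight_eq_card_erase hstar hsT ht (hbelow T hsT hT)
  have hL₀ : cutWeight E (ltWeight s x) S₀ + 1 = #S₀ᶜ := by
    rw [hL S₀ hs₀ hS₀, Finset.card_erase_add_one (Finset.mem_compl.2 ht₀)]
  have hle : ∀ T, IsMinCutSet E (stitch1 w s) T →
      cutWeight E (ltWeight s x) S₀ ≤ cutWeight E (ltWeight s x) T := by
    intro T hT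
    wlog hsT : s ∈ T generalizing T
    · rw [← cutWeight_compl _ T]
      exact this Tᶜ hT.compl (Finset.mem_compl.2 hsT)
    have hpred := Finset.pred_card_le_card_erase (s := Tᶜ) (a := t)
    rw [card_compl_eq_of_isMinCutSet_stitch1 hstar hT hS₀ hsT hs₀] at hpred
    rw [hL T hsT hT]
    omega
  rw [isMinCutSet_stitch2_iff hstar]
  constructor
  · rintro ⟨hS, hLS⟩
    have htS : t ∉ S := fun htS => by
      have hLS₀ := hLS S₀ hS₀
      rw [hL S hs hS, Finset.erase_eq_of_notMem fun h => Finset.mem_compl.1 h htS,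
        card_compl_eq_of_isMinCutSet_stitch1 hstar hS hS₀ hs hs₀] at hLS₀
      omega
    exact eq_of_isMinCutSet_stitch1 hstar hS hS₀ hs hs₀ htS ht₀
  · rintro rfl
    exact ⟨hS₀, hle⟩

end BinarySearch

theorem binary_search_case_three_general (n : ℕ) (E : Finset (Sym2 (Fin n)))
    (w : Sym2 (Fin n) → ℕ) (s : Fin n)
    (hstar : ∀ v : Fin n, v ≠ s → Sym2.mk s v ∈ E)
    (tmax t' : Fin n)
    (hmax : ∃ S : Finset (Fin n), s ∈ S ∧ IsMinCutSet E (stitch1 w s) S ∧ tmax ∉ S)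
    (hsecond : ∀ u : Fin n,
      (∃ S : Finset (Fin n), s ∈ S ∧ IsMinCutSet E (stitch1 w s) S ∧ u ∉ S) →
        u ≠ tmax → u ≤ t')
    (x : Fin n) (hx₁ : t' < x) (hx₂ : x ≤ tmax) :
    (∃! S : Finset (Fin n), s ∈ S ∧ IsMinCutSet E (stitch2 w s x) S) ∧
      ∀ S : Finset (Fin n), s ∈ S → IsMinCutSet E (stitch2 w s x) S →
        tmax ∉ S ∧ cutWeight E (ltWeight s x) S + 1 = (Finset.univ \ S).card := by
  obtain ⟨S₀, hs₀, hS₀, ht₀⟩ := hmax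
  have hbelow : ∀ S, s ∈ S → IsMinCutSet E (stitch1 w s) S → ∀ u ∉ S, u ≠ tmax → u < x :=
    fun S hs hS u hu hne => (hsecond u ⟨S, hs, hS, hu⟩ hne).trans_lt hx₁
  have hiff : ∀ S, s ∈ S → (IsMinCutSet E (stitch2 w s x) S ↔ S = S₀) := fun S hs =>
    isMinCutSet_stitch2_iff_eq hstar (not_lt.2 hx₂) hbelow hS₀ hs₀ ht₀ hs
  refine ⟨⟨S₀, ⟨hs₀, (hiff S₀ hs₀).2 rfl⟩, fun S hS => (hiff S hS.1).1 hS.2⟩,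
    fun S hs hS => ?_⟩
  obtain rfl := (hiff S hs).1 hS
  rw [cutWeight_ltWeight_eq_card_erase hstar hs (not_lt.2 hx₂) (hbelow S hs hS₀),
    ← Finset.compl_eq_univ_sdiff, Finset.card_erase_add_one (Finset.mem_compl.2 ht₀)]
  exact ⟨ht₀, rfl⟩

/-- Binary search, case 3 (isolation): with at least two global minimum cut-sets,
if x lies strictly between the second-largest and the largest separated vertex
(inclusive on the right), the minimizer S (with s ∈ S) of the triple-stitched cut weight
is unique, excludes tmax, and satisfies w_s^{<x}(cut(S)) = |V ∖ S| - 1. -/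
theorem binary_search_case_three (n : ℕ) (E : Finset (Sym2 (Fin n)))
    (w : Sym2 (Fin n) → ℕ) (s : Fin n)
    (hstar : ∀ v : Fin n, v ≠ s → Sym2.mk s v ∈ E)
    (S₁ S₂ : Finset (Fin n)) (hs₁ : s ∈ S₁) (hs₂ : s ∈ S₂)
    (hm₁ : IsMinCutSet E (stitch1 w s) S₁) (hm₂ : IsMinCutSet E (stitch1 w s) S₂)
    (hS₁₂ : S₁ ≠ S₂)
    (tmax t' : Fin n)
    (hmax : ∃ S : Finset (Fin n), s ∈ S ∧ IsMinCutSet E (stitch1 w s) S ∧ tmax ∉ S)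
    (ht' : ∃ S : Finset (Fin n), s ∈ S ∧ IsMinCutSet E (stitch1 w s) S ∧ t' ∉ S)
    (hlt : t' < tmax)
    (hmaxmax : ∀ u : Fin n,
      (∃ S : Finset (Fin n), s ∈ S ∧ IsMinCutSet E (stitch1 w s) S ∧ u ∉ S) → u ≤ tmax)
    (hsecond : ∀ u : Fin n,
      (∃ S : Finset (Fin n), s ∈ S ∧ IsMinCutSet E (stitch1 w s) S ∧ u ∉ S) →
        u ≠ tmax → u ≤ t')
    (x : Fin n) (hx₁ : t' < x) (hx₂ : x ≤ tmax) :
    (∃! S : Finset (Fin n), s ∈ S ∧ IsMinCutSet E (stitch2 w s x) S) ∧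
      ∀ S : Finset (Fin n), s ∈ S → IsMinCutSet E (stitch2 w s x) S →
        tmax ∉ S ∧ cutWeight E (ltWeight s x) S + 1 = (Finset.univ \ S).card :=
  binary_search_case_three_general n E w s hstar tmax t' hmax hsecond x hx₁ hx₂
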